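/- Let $u, v, w \in \mathbb{R}^7$ be orthonormal with $\varphi_0(u,v,w) = 0$, and set $R = \chi(u,v,w)$. Then the seven vectors $\{u, v, w, R, u \times v, v \times w, w \times u\}$ form an orthonormal basis of $\mathbb{R}^7$. -/

import Mathlib

noncomputable section
open scoped RealInnerProductSpace

abbrev R7 : Type := EuclideanSpace ℝ (Fin 7)

/-- standard basis vector -/
def e (k : Fin 7) : R7 := EuclideanSpace.single k 1

/-- `e^{ijk}(u,v,w)` -/
def tri (i j k : Fin 7) (u v w : R7) : ℝ :=
  Matrix.det !![u i, u j, u k; v i, v j, v k; w i, w j, w k]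

/-- the standard `G₂` 3-form `φ₀` (indices shifted to 0-based) -/
def phi0 (u v w : R7) : ℝ :=
  tri 0 1 2 u v w + tri 0 3 4 u v w + tri 0 5 6 u v w + tri 1 3 5 u v w
    - tri 1 4 6 u v w - tri 2 3 6 u v w - tri 2 4 5 u v w

/-- `e^{ijkl}(u,v,w,z)` -/
def quad (i j k l : Fin 7) (u v w z : R7) : ℝ :=
  Matrix.det !![u i, u j, u k, u l; v i, v j, v k, v l;
    w i, w j, w k, w l; z i, z j, z k, z l]

/-- the 4-form `⋆φ₀` -/
def starphi0 (u v w z : R7) : ℝ :=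
  quad 3 4 5 6 u v w z + quad 1 2 5 6 u v w z + quad 1 2 3 4 u v w z
    + quad 0 2 4 6 u v w z - quad 0 2 3 5 u v w z - quad 0 1 4 5 u v w z
    - quad 0 1 3 6 u v w z

/-- the cross product: `⟪u × v, w⟫ = φ₀(u,v,w)` -/
def cross (u v : R7) : R7 :=
  (WithLp.equiv 2 (Fin 7 → ℝ)).symm fun k => phi0 u v (e k)

/-- the associator `χ`: `⟪χ(u,v,w), z⟫ = ⋆φ₀(u,v,w,z)` -/
def chi (u v w : R7) : R7 :=
  (WithLp.equiv 2 (Fin 7 → ℝ)).symm fun k => starphi0 u v w (e k)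

/-- the coassociator `σ` -/
def sigma (a b c d : R7) : R7 :=
  ⟪b, cross c d⟫ • a + ⟪c, cross a d⟫ • b + ⟪a, cross b d⟫ • c + ⟪b, cross a c⟫ • d

/-- Gram determinant `|u ∧ v ∧ w|²` -/
def gram3 (u v w : R7) : ℝ :=
  Matrix.det !![⟪u,u⟫, ⟪u,v⟫, ⟪u,w⟫; ⟪v,u⟫, ⟪v,v⟫, ⟪v,w⟫; ⟪w,u⟫, ⟪w,v⟫, ⟪w,w⟫]

/-- Gram determinant `|u ∧ v ∧ w ∧ z|²` -/
def gram4 (u v w z : R7) : ℝ :=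
  Matrix.det !![⟪u,u⟫, ⟪u,v⟫, ⟪u,w⟫, ⟪u,z⟫;
    ⟪v,u⟫, ⟪v,v⟫, ⟪v,w⟫, ⟪v,z⟫;
    ⟪w,u⟫, ⟪w,v⟫, ⟪w,w⟫, ⟪w,z⟫;
    ⟪z,u⟫, ⟪z,v⟫, ⟪z,w⟫, ⟪z,z⟫]

/-! Expanding `⋆φ₀` in coordinates gives the associator identity
`χ(a,b,c) = -a × (b × c) - ⟪a,b⟫ c + ⟪a,c⟫ b`, so `χ(u,v,w) = -u × (v × w)` here.
Since `φ₀` is alternating and `⟪a × b, a × c⟫ = |a|² ⟪b,c⟫ - ⟪a,b⟫ ⟪a,c⟫`, every entry of the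
Gram matrix of the seven vectors reduces to inner products among `u, v, w` and to `φ₀(u,v,w)`,
which gives the identity matrix; seven orthonormal vectors in `ℝ⁷` form a basis. -/

theorem Matrix.det_fin_four {R : Type*} [CommRing R] (A : Matrix (Fin 4) (Fin 4) R) :
    A.det = A 0 0 * (A 1 1 * A 2 2 * A 3 3 - A 1 1 * A 2 3 * A 3 2 - A 1 2 * A 2 1 * A 3 3
        + A 1 2 * A 2 3 * A 3 1 + A 1 3 * A 2 1 * A 3 2 - A 1 3 * A 2 2 * A 3 1)
      - A 0 1 * (A 1 0 * A 2 2 * A 3 3 - A 1 0 * A 2 3 * A 3 2 - A 1 2 * A 2 0 * A 3 3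
        + A 1 2 * A 2 3 * A 3 0 + A 1 3 * A 2 0 * A 3 2 - A 1 3 * A 2 2 * A 3 0)
      + A 0 2 * (A 1 0 * A 2 1 * A 3 3 - A 1 0 * A 2 3 * A 3 1 - A 1 1 * A 2 0 * A 3 3
        + A 1 1 * A 2 3 * A 3 0 + A 1 3 * A 2 0 * A 3 1 - A 1 3 * A 2 1 * A 3 0)
      - A 0 3 * (A 1 0 * A 2 1 * A 3 2 - A 1 0 * A 2 2 * A 3 1 - A 1 1 * A 2 0 * A 3 2
        + A 1 1 * A 2 2 * A 3 0 + A 1 2 * A 2 0 * A 3 1 - A 1 2 * A 2 1 * A 3 0) := by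
  simp [Matrix.det_succ_row_zero, Fin.sum_univ_succ, Fin.succAbove]
  ring

theorem orthonormal_iff_ite_of_le {𝕜 E ι : Type*} [RCLike 𝕜] [SeminormedAddCommGroup E]
    [InnerProductSpace 𝕜 E] [LinearOrder ι] {v : ι → E} :
    Orthonormal 𝕜 v ↔ ∀ i j, i ≤ j → inner 𝕜 (v i) (v j) = if i = j then 1 else 0 := by
  rw [orthonormal_iff_ite]
  refine ⟨fun h i j _ => h i j, fun h i j => ?_⟩
  rcases le_total i j with hij | hji
  · exact h i j hij
  · by_cases hne : i = j
    · exact h i j (hne ▸ le_rfl)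
    · rw [if_neg hne, ← inner_conj_symm, h j i hji, if_neg (Ne.symm hne), map_zero]

namespace G2

variable (a b c : R7)

lemma inner_eq_sum (x y : R7) : ⟪x, y⟫ = ∑ i, x i * y i := by
  simp only [PiLp.inner_apply, RCLike.inner_apply, conj_trivial, mul_comm]

lemma cross_apply (k : Fin 7) : cross a b k = phi0 a b (e k) := rfl

lemma chi_apply (k : Fin 7) : chi a b c k = starphi0 a b c (e k) := rfl

lemma phi0_swap_left : phi0 b a c = -phi0 a b c := by
  simp [phi0, tri, Matrix.det_fin_three]
  ring

lemma phi0_swap_right : phi0 a c b = -phi0 a b c := by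
  simp [phi0, tri, Matrix.det_fin_three]
  ring

lemma phi0_rotate : phi0 b c a = phi0 a b c := by
  rw [phi0_swap_right, phi0_swap_left, neg_neg]

lemma inner_cross : ⟪cross a b, c⟫ = phi0 a b c := by
  simp [inner_eq_sum, Fin.sum_univ_seven, cross_apply, phi0, tri, Matrix.det_fin_three, e]
  ring

lemma cross_anticomm : cross b a = -cross a b := by
  ext k
  exact phi0_swap_left a b (e k)

lemma inner_self_cross' : ⟪cross a b, a⟫ = 0 := by
  have h := phi0_swap_left a a b
  rw [inner_cross, phi0_swap_right]
  linarith

lemma inner_cross_self' : ⟪cross a b, b⟫ = 0 := by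
  have h := phi0_swap_right a b b
  rw [inner_cross]
  linarith

lemma inner_self_cross : ⟪a, cross a b⟫ = 0 := by
  rw [real_inner_comm, inner_self_cross']

lemma inner_cross_self : ⟪b, cross a b⟫ = 0 := by
  rw [real_inner_comm, inner_cross_self']

lemma inner_cross_cross_left :
    ⟪cross a b, cross a c⟫ = ⟪a, a⟫ * ⟪b, c⟫ - ⟪a, b⟫ * ⟪a, c⟫ := by
  simp only [inner_eq_sum, Fin.sum_univ_seven, cross_apply]
  simp [phi0, tri, Matrix.det_fin_three, e]
  ring

lemma inner_cross_cross_mid :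
    ⟪cross a b, cross b c⟫ = ⟪b, a⟫ * ⟪b, c⟫ - ⟪b, b⟫ * ⟪a, c⟫ := by
  rw [← neg_neg (cross a b), ← cross_anticomm, inner_neg_left, inner_cross_cross_left]
  ring

lemma inner_cross_cross_right :
    ⟪cross a b, cross c a⟫ = ⟪a, b⟫ * ⟪a, c⟫ - ⟪a, a⟫ * ⟪b, c⟫ := by
  rw [cross_anticomm a c, inner_neg_right, inner_cross_cross_left]
  ring

lemma inner_mid_cross_cross :
    ⟪b, cross a (cross b c)⟫ = ⟪b, b⟫ * ⟪a, c⟫ - ⟪b, a⟫ * ⟪b, c⟫ := by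
  rw [real_inner_comm, inner_cross, phi0_swap_right, ← inner_cross, inner_cross_cross_mid]
  ring

lemma inner_right_cross_cross :
    ⟪c, cross a (cross b c)⟫ = ⟪c, a⟫ * ⟪c, b⟫ - ⟪c, c⟫ * ⟪a, b⟫ := by
  rw [real_inner_comm, inner_cross, phi0_swap_right, ← inner_cross, cross_anticomm c a,
    cross_anticomm c b, inner_neg_neg, inner_cross_cross_left]
  ring

lemma chi_eq_cross_cross : chi a b c = -cross a (cross b c) - ⟪a, b⟫ • c + ⟪a, c⟫ • b := by
  ext k
  fin_cases k <;>
  simp [inner_eq_sum, Fin.sum_univ_seven, chi_apply, cross_apply, starphi0, quad,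
    Matrix.det_fin_four, phi0, tri, Matrix.det_fin_three, e] <;>
  ring

end G2

open G2

theorem stmt7 (u v w : R7) (hu : ‖u‖ = 1) (hv : ‖v‖ = 1) (hw : ‖w‖ = 1)
    (huv : ⟪u, v⟫ = 0) (hvw : ⟪v, w⟫ = 0) (huw : ⟪u, w⟫ = 0)
    (hphi : phi0 u v w = 0) :
    Orthonormal ℝ ![u, v, w, chi u v w, cross u v, cross v w, cross w u] ∧
      Submodule.span ℝ
        (Set.range ![u, v, w, chi u v w, cross u v, cross v w, cross w u]) = ⊤ := by
  have hR : chi u v w = -cross u (cross v w) := by simp [chi_eq_cross_cross, huv, huw]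
  have hw_uv : ⟪w, cross u v⟫ = 0 := by rw [real_inner_comm, inner_cross, hphi]
  have hu_vw : ⟪u, cross v w⟫ = 0 := by rw [real_inner_comm, inner_cross, phi0_rotate, hphi]
  have hv_wu : ⟪v, cross w u⟫ = 0 := by
    rw [real_inner_comm, inner_cross, ← phi0_rotate w u v, hphi]
  have huu : ⟪u, u⟫ = 1 := by simp [hu]
  have hvv : ⟪v, v⟫ = 1 := by simp [hv]
  have hww : ⟪w, w⟫ = 1 := by simp [hw]
  have hON : Orthonormal ℝ ![u, v, w, chi u v w, cross u v, cross v w, cross w u] := by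
    rw [orthonormal_iff_ite_of_le]
    intro i j hij
    fin_cases i <;> fin_cases j <;>
    -- `inner_self_eq_norm_sq_to_K` would turn `⟪x, x⟫` into `‖x‖ ^ 2` before the cross identities fire
    simp [-inner_self_eq_norm_sq_to_K, hR, huu, hvv, hww, huv, hvw, huw, hw_uv, hu_vw, hv_wu,
      inner_eq_zero_symm.1 huv, inner_eq_zero_symm.1 hvw, inner_eq_zero_symm.1 huw,
      inner_self_cross, inner_cross_self, inner_self_cross', inner_cross_self',
      inner_cross_cross_left, inner_cross_cross_mid, inner_cross_cross_right,
      inner_mid_cross_cross, inner_right_cross_cross] at hij ⊢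
  exact ⟨hON, hON.linearIndependent.span_eq_top_of_card_eq_finrank (by simp)⟩
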